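/- arXiv:2405.04137 — 3 statements merged into one kernel-verified Lean document; each statement's English description precedes it below -/
import Mathlib

section
/- Fusion procedure for n = 3: the operator (1/3!) R_{12}(h) R_{13}(2h) R_{23}(h) on (ℂ^N)^{⊗3} equals the antisymmetrizer E_{[3]} = (1/6) Σ_{p ∈ S₃} sgn(p) · p, where S₃ acts on (ℂ^N)^{⊗3} by permuting tensor factors. (This is the evaluation of R_{[3]}(u₁, u₂, u₃) = (1/3!) R_{12}(u₁-u₂) R_{13}(u₁-u₃) R_{23}(u₂-u₃) at u₁ = 0, u₂ = -h, u₃ = -2h.) -/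
open Matrix

noncomputable section

/-- Flip of factors 1,2 on `(ℂ^N)^{⊗3}`. -/
def P12 (N : ℕ) : Matrix (Fin N × Fin N × Fin N) (Fin N × Fin N × Fin N) ℂ :=
  fun p q => if p.1 = q.2.1 ∧ p.2.1 = q.1 ∧ p.2.2 = q.2.2 then 1 else 0

/-- Flip of factors 1,3 on `(ℂ^N)^{⊗3}`. -/
def P13 (N : ℕ) : Matrix (Fin N × Fin N × Fin N) (Fin N × Fin N × Fin N) ℂ :=
  fun p q => if p.1 = q.2.2 ∧ p.2.1 = q.2.1 ∧ p.2.2 = q.1 then 1 else 0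

/-- Flip of factors 2,3 on `(ℂ^N)^{⊗3}`. -/
def P23 (N : ℕ) : Matrix (Fin N × Fin N × Fin N) (Fin N × Fin N × Fin N) ℂ :=
  fun p q => if p.1 = q.1 ∧ p.2.1 = q.2.2 ∧ p.2.2 = q.2.1 then 1 else 0

def R12 (N : ℕ) (h u : ℂ) : Matrix (Fin N × Fin N × Fin N) (Fin N × Fin N × Fin N) ℂ :=
  1 - (h / u) • P12 N

def R13 (N : ℕ) (h u : ℂ) : Matrix (Fin N × Fin N × Fin N) (Fin N × Fin N × Fin N) ℂ :=
  1 - (h / u) • P13 N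

def R23 (N : ℕ) (h u : ℂ) : Matrix (Fin N × Fin N × Fin N) (Fin N × Fin N × Fin N) ℂ :=
  1 - (h / u) • P23 N

/-- The antisymmetrizer `E_{[3]} = (1/6) Σ_{p ∈ S₃} sgn(p) p` on `(ℂ^N)^{⊗3}`,
written out via the flips: the three transpositions have sign `-1` and the two
3-cycles `P₁₂P₁₃`, `P₁₃P₁₂` have sign `+1`. -/
def antisym3 (N : ℕ) : Matrix (Fin N × Fin N × Fin N) (Fin N × Fin N × Fin N) ℂ :=
  (6⁻¹ : ℂ) • (1 - P12 N - P13 N - P23 N + P12 N * P13 N + P13 N * P12 N)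

/-!
Since `R(h) = 1 - P` and `R(2h) = 1 - P/2`, the product `R₁₂(h) R₁₃(2h) R₂₃(h)` expands into a
combination of products of at most three transpositions of the factors. The relations
`P₁₃ P₂₃ = P₁₂ P₁₃`, `P₁₂ P₂₃ = P₁₃ P₁₂` and `P₁₂ P₁₃ P₂₃ = P₁₃`, which hold in `S₃` and hence
for the permutation matrices of the flips, reduce it to `1 - P₁₂ - P₁₃ - P₂₃ + P₁₂ P₁₃ + P₁₃ P₁₂`,
six times the antisymmetrizer.
-/

section Transpositions

variable {𝕜 A : Type*} [Field 𝕜] [CharZero 𝕜] [Ring A] [Algebra 𝕜 A]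

theorem one_sub_mul_one_sub_half_smul_mul_one_sub {a b c : A}
    (hbc : b * c = a * b) (hac : a * c = b * a) (habc : a * b * c = b) :
    (1 - a) * (1 - (2⁻¹ : 𝕜) • b) * (1 - c) = 1 - a - b - c + a * b + b * a := by
  have expand : (1 - a) * (1 - (2⁻¹ : 𝕜) • b) * (1 - c) =
      1 - a - c + a * c - (2⁻¹ : 𝕜) • (b - a * b - b * c + a * b * c) := by
    simp only [mul_sub, sub_mul, mul_one, one_mul, mul_smul_comm, smul_mul_assoc]
    module
  rw [expand, hbc, hac, habc]
  module

end Transpositions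

section Flips

variable (α : Type*)

def swap12 : Equiv.Perm (α × α × α) :=
  Function.Involutive.toPerm (fun p => (p.2.1, p.1, p.2.2)) fun _ => rfl

def swap13 : Equiv.Perm (α × α × α) :=
  Function.Involutive.toPerm (fun p => (p.2.2, p.2.1, p.1)) fun _ => rfl

def swap23 : Equiv.Perm (α × α × α) :=
  Function.Involutive.toPerm (fun p => (p.1, p.2.2, p.2.1)) fun _ => rfl

end Flips

section FlipMatrices

variable (N : ℕ)

theorem P12_eq_permMatrix : P12 N = (swap12 (Fin N)).permMatrix ℂ := by
  ext p q
  simp only [P12, PEquiv.toMatrix_apply, Equiv.toPEquiv_apply, Option.mem_def, Option.some_inj,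
    swap12, Prod.ext_iff]
  exact if_congr (by tauto) rfl rfl

theorem P13_eq_permMatrix : P13 N = (swap13 (Fin N)).permMatrix ℂ := by
  ext p q
  simp only [P13, PEquiv.toMatrix_apply, Equiv.toPEquiv_apply, Option.mem_def, Option.some_inj,
    swap13, Prod.ext_iff]
  exact if_congr (by tauto) rfl rfl

theorem P23_eq_permMatrix : P23 N = (swap23 (Fin N)).permMatrix ℂ := by
  ext p q
  simp only [P23, PEquiv.toMatrix_apply, Equiv.toPEquiv_apply, Option.mem_def, Option.some_inj,
    swap23, Prod.ext_iff]
  exact if_congr (by tauto) rfl rfl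

theorem P13_mul_P23 : P13 N * P23 N = P12 N * P13 N := by
  simp only [P12_eq_permMatrix, P13_eq_permMatrix, P23_eq_permMatrix, ← permMatrix_mul]
  rfl

theorem P12_mul_P23 : P12 N * P23 N = P13 N * P12 N := by
  simp only [P12_eq_permMatrix, P13_eq_permMatrix, P23_eq_permMatrix, ← permMatrix_mul]
  rfl

theorem P12_mul_P13_mul_P23 : P12 N * P13 N * P23 N = P13 N := by
  simp only [P12_eq_permMatrix, P13_eq_permMatrix, P23_eq_permMatrix, ← permMatrix_mul]
  rfl

end FlipMatrices

theorem fusion_n_three_general (N : ℕ) (h : ℂ) (hh : h ≠ 0) :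
    (6⁻¹ : ℂ) • (R12 N h h * R13 N h (2 * h) * R23 N h h) = antisym3 N := by
  have hR12 : R12 N h h = 1 - P12 N := by rw [R12, div_self hh, one_smul]
  have hR13 : R13 N h (2 * h) = 1 - (2⁻¹ : ℂ) • P13 N := by
    rw [R13, div_mul_cancel_right₀ hh]
  have hR23 : R23 N h h = 1 - P23 N := by rw [R23, div_self hh, one_smul]
  rw [hR12, hR13, hR23, antisym3, one_sub_mul_one_sub_half_smul_mul_one_sub (P13_mul_P23 N)
    (P12_mul_P23 N) (P12_mul_P13_mul_P23 N)]

/-- Fusion procedure for `n = 3`: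
`(1/3!) R₁₂(h) R₁₃(2h) R₂₃(h) = E_{[3]}`, which is the evaluation of
`R_{[3]}(u₁,u₂,u₃)` at `u₁ = 0, u₂ = -h, u₃ = -2h`. -/
theorem fusion_n_three (N : ℕ) (hN : 2 ≤ N) (h : ℂ) (hh : h ≠ 0) :
    (6⁻¹ : ℂ) • (R12 N h h * R13 N h (2 * h) * R23 N h h) = antisym3 N :=
  fusion_n_three_general N h hh

end
end

section
/- Abstract unitarity for the ZZ-type R-matrix: let A be an associative unital algebra over ℂ(u, h) containing elements P, Q with P² = 1, Q² = N·Q, and PQ = QP = ε·Q, where ε = ±1 and N is a scalar. Set κ = N/2 - ε and R(u) = 1 - (h/u) P + (h/(u - hκ)) Q. Then R(u) R(-u) = (1 - h²/u²)·1. -/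
/-! Since `P` is an involution and `Q` spans a two-sided ideal `K Q` on which `P` acts by `ε`,
the product `R(u) R(-u)` collapses to `(1 - h²/u²)·1 + c·Q` for a scalar `c`. Computing,
`c = h² (N - 2κ - 2ε) / (h²κ² - u²)`, which the choice `κ = N/2 - ε` makes vanish. -/

theorem one_sub_smul_add_smul_mul_one_add_smul_add_smul {K A : Type*} [CommRing K] [Ring A]
    [Algebra K A] {P Q : A} {N ε : K} (hP : P * P = 1) (hQ : Q * Q = N • Q)
    (hPQ : P * Q = ε • Q) (hQP : Q * P = ε • Q) (a b c : K) :
    (1 - a • P + b • Q) * (1 + a • P + c • Q)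
      = (1 - a ^ 2) • (1 : A) + (b + c + ε * a * (b - c) + N * b * c) • Q := by
  simp only [sub_mul, add_mul, mul_add, one_mul, mul_one, smul_mul_smul_comm, hP, hQ, hPQ, hQP,
    smul_smul]
  module

theorem div_add_div_add_mul_div_sub_div_add_mul_div_mul_div_eq_zero {K : Type*} [Field K]
    {u h κ ε : K} (hu : u ≠ 0) (hden1 : u - h * κ ≠ 0) (hden2 : -u - h * κ ≠ 0) :
    h / (u - h * κ) + h / (-u - h * κ) + ε * (h / u) * (h / (u - h * κ) - h / (-u - h * κ))
      + 2 * (κ + ε) * (h / (u - h * κ)) * (h / (-u - h * κ)) = 0 := by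
  field_simp
  ring

theorem ZZ_R_matrix_abstract_unitarity_general {K : Type*} [Field K] [CharZero K]
    {A : Type*} [Ring A] [Algebra K A]
    (u h N ε : K) (P Q : A)
    (hP : P * P = 1) (hQ : Q * Q = N • Q)
    (hPQ : P * Q = ε • Q) (hQP : Q * P = ε • Q)
    (hu : u ≠ 0)
    (hden1 : u - h * (N / 2 - ε) ≠ 0) (hden2 : -u - h * (N / 2 - ε) ≠ 0) :
    ((1 : A) - (h / u) • P + (h / (u - h * (N / 2 - ε))) • Q) *
      ((1 : A) + (h / u) • P + (h / (-u - h * (N / 2 - ε))) • Q)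
      = (1 - h ^ 2 / u ^ 2) • (1 : A) := by
  have hN : N = 2 * (N / 2 - ε + ε) := by ring
  have hcoeff := div_add_div_add_mul_div_sub_div_add_mul_div_mul_div_eq_zero (ε := ε) hu hden1 hden2
  rw [← hN] at hcoeff
  rw [one_sub_smul_add_smul_mul_one_add_smul_add_smul hP hQ hPQ hQP, hcoeff, zero_smul,
    add_zero, div_pow]

/-- Abstract unitarity for the ZZ-type R-matrix: in an associative unital algebra `A`
over a field `K` (playing the role of `ℂ(u,h)`), with `P² = 1`, `Q² = N·Q`,
`PQ = QP = ε·Q` (ε = ±1), `κ = N/2 - ε` and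
`R(u) = 1 - (h/u)P + (h/(u - hκ))Q`, one has `R(u) R(-u) = (1 - h²/u²)·1`. -/
theorem ZZ_R_matrix_abstract_unitarity {K : Type*} [Field K] [CharZero K]
    {A : Type*} [Ring A] [Algebra K A]
    (u h N ε : K) (hε : ε = 1 ∨ ε = -1) (P Q : A)
    (hP : P * P = 1) (hQ : Q * Q = N • Q)
    (hPQ : P * Q = ε • Q) (hQP : Q * P = ε • Q)
    (hu : u ≠ 0)
    (hden1 : u - h * (N / 2 - ε) ≠ 0) (hden2 : -u - h * (N / 2 - ε) ≠ 0) :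
    ((1 : A) - (h / u) • P + (h / (u - h * (N / 2 - ε))) • Q) *
      ((1 : A) + (h / u) • P + (h / (-u - h * (N / 2 - ε))) • Q)
      = (1 - h ^ 2 / u ^ 2) • (1 : A) :=
  ZZ_R_matrix_abstract_unitarity_general u h N ε P Q hP hQ hPQ hQP hu hden1 hden2
end

section
/- If a matrix T(u) = Σ e_{ij} ⊗ t_{ij}(u) with entries in an associative algebra of formal series satisfies the RTT relation R(u - v) T₁(u) T₂(v) = T₂(v) T₁(u) R(u - v) for the Yang R-matrix R(u) = I - (h/u) P, and T(u) is invertible, then B(u) = T(u) T(-u)^{-1} satisfies the reflection equation R(u - v) B₁(u) R(u + v) B₂(v) = B₂(v) R(u + v) B₁(u) R(u - v), and the unitarity condition B(u) B(-u) = 1. -/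
/-!
Write `B(u) = T(u) T(-u)⁻¹`. Besides RTT at `(u, v)`, the computation uses RTT at `(u, -v)`, and
at `(v, -u)` and `(-v, -u)` with the two auxiliary factors exchanged, which follow from RTT by
conjugating with the flip `P`: it swaps `T₁` and `T₂` and commutes with the R-matrix.
Multiplying these by `T₁(-u)⁻¹` or `T₂(-v)⁻¹` on both sides gives exchange relations for the
inverses, and `R(u - v)`, `R(u + v)` commute, being polynomials in `P`. Moving the factors of the
left side of the reflection equation past each other one exchange relation at a time produces
the right side.
-/

open Matrix

noncomputable section

variable {A : Type*} [Ring A] [Algebra ℂ A]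

/-- The flip operator with entries in `A`. -/
def flipPA (N : ℕ) (A : Type*) [Ring A] [Algebra ℂ A] :
    Matrix (Fin N × Fin N) (Fin N × Fin N) A :=
  fun p q => if p.1 = q.2 ∧ p.2 = q.1 then 1 else 0

/-- The Yang R-matrix `R(u) = I - (h/u) P`, with (scalar) entries viewed in `A`. -/
def yangRA (N : ℕ) (A : Type*) [Ring A] [Algebra ℂ A] (h u : ℂ) :
    Matrix (Fin N × Fin N) (Fin N × Fin N) A :=
  1 - (h / u) • flipPA N A

/-- `T₁(u) = T(u) ⊗ 1` acting on the first auxiliary factor. -/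
def emb1 {N : ℕ} (M : Matrix (Fin N) (Fin N) A) :
    Matrix (Fin N × Fin N) (Fin N × Fin N) A :=
  fun p q => if p.2 = q.2 then M p.1 q.1 else 0

/-- `T₂(v) = 1 ⊗ T(v)` acting on the second auxiliary factor. -/
def emb2 {N : ℕ} (M : Matrix (Fin N) (Fin N) A) :
    Matrix (Fin N × Fin N) (Fin N × Fin N) A :=
  fun p q => if p.1 = q.1 then M p.2 q.2 else 0

section Monoid

variable {M : Type*} [Monoid M]

/-- The reflection equation in an arbitrary monoid, with `x = T₁(u)`, `y = T₂(v)`,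
`x' = T₁(-u)`, `y' = T₂(-v)`, `R = R(u - v)` and `S = R(u + v)`. -/
theorem reflection_equation_of_rtt {R S x y : M} {x' y' : Mˣ}
    (hxy : R * x * y = y * x * R) (hyx' : S * y * x' = x' * y * S)
    (hxy' : S * x * y' = y' * x * S) (hy'x' : R * y' * x' = x' * y' * R)
    (hRS : R * S = S * R) :
    R * (x * ↑x'⁻¹) * S * (y * ↑y'⁻¹) = y * ↑y'⁻¹ * S * (x * ↑x'⁻¹) * R := by
  have hyx'_inv : ↑x'⁻¹ * (S * y) = y * S * ↑x'⁻¹ :=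
    SemiconjBy.units_inv_symm_left (x := y * S) (by simp only [SemiconjBy, ← mul_assoc, hyx'])
  have hxy'_inv : ↑y'⁻¹ * (S * x) = x * S * ↑y'⁻¹ :=
    SemiconjBy.units_inv_symm_left (x := x * S) (by simp only [SemiconjBy, ← mul_assoc, hxy'])
  have hy'x'_inv : R * ↑(y' * x')⁻¹ = ↑(x' * y')⁻¹ * R :=
    SemiconjBy.units_inv_right (by simp only [SemiconjBy, Units.val_mul, ← mul_assoc, hy'x'])
  simp only [_root_.mul_inv_rev, Units.val_mul] at hy'x'_inv
  calc R * (x * ↑x'⁻¹) * S * (y * ↑y'⁻¹)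
      = R * x * (↑x'⁻¹ * (S * y)) * ↑y'⁻¹ := by simp only [mul_assoc]
    _ = R * x * y * S * ↑x'⁻¹ * ↑y'⁻¹ := by rw [hyx'_inv]; simp only [mul_assoc]
    _ = y * x * (R * S) * ↑x'⁻¹ * ↑y'⁻¹ := by rw [hxy]; simp only [mul_assoc]
    _ = y * x * S * (R * (↑x'⁻¹ * ↑y'⁻¹)) := by rw [hRS]; simp only [mul_assoc]
    _ = y * (x * S * ↑y'⁻¹) * ↑x'⁻¹ * R := by rw [hy'x'_inv]; simp only [mul_assoc]
    _ = y * ↑y'⁻¹ * S * (x * ↑x'⁻¹) * R := by rw [← hxy'_inv]; simp only [mul_assoc]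

end Monoid

section Embeddings

variable {N : ℕ} {R : Type*} [Ring R]

theorem emb1_eq_blockDiagonal (M : Matrix (Fin N) (Fin N) R) :
    emb1 M = blockDiagonal fun _ => M := by
  ext ⟨i, j⟩ ⟨k, l⟩
  rfl

theorem emb2_eq_submatrix_emb1 (M : Matrix (Fin N) (Fin N) R) :
    emb2 M = (emb1 M).submatrix (Equiv.prodComm _ _) (Equiv.prodComm _ _) :=
  rfl

theorem emb1_mul (M M' : Matrix (Fin N) (Fin N) R) : emb1 (M * M') = emb1 M * emb1 M' := by
  simp only [emb1_eq_blockDiagonal, blockDiagonal_mul]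

theorem emb1_one : emb1 (1 : Matrix (Fin N) (Fin N) R) = 1 := by
  rw [emb1_eq_blockDiagonal, ← blockDiagonal_one]
  rfl

theorem emb2_mul (M M' : Matrix (Fin N) (Fin N) R) : emb2 (M * M') = emb2 M * emb2 M' := by
  simp only [emb2_eq_submatrix_emb1, emb1_mul, submatrix_mul_equiv]

theorem emb2_one : emb2 (1 : Matrix (Fin N) (Fin N) R) = 1 := by
  rw [emb2_eq_submatrix_emb1, emb1_one, submatrix_one_equiv]

variable (N R) in
def emb1Hom : Matrix (Fin N) (Fin N) R →* Matrix (Fin N × Fin N) (Fin N × Fin N) R where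
  toFun := emb1
  map_one' := emb1_one
  map_mul' := emb1_mul

variable (N R) in
def emb2Hom : Matrix (Fin N) (Fin N) R →* Matrix (Fin N × Fin N) (Fin N × Fin N) R where
  toFun := emb2
  map_one' := emb2_one
  map_mul' := emb2_mul

end Embeddings

section Flip

variable {N : ℕ}

theorem flipPA_eq_toMatrix :
    flipPA N A = (Equiv.prodComm (Fin N) (Fin N)).toPEquiv.toMatrix := by
  ext p q
  simp [flipPA, PEquiv.toMatrix_apply, Prod.ext_iff, eq_comm, and_comm]

theorem flipPA_mul (X : Matrix (Fin N × Fin N) (Fin N × Fin N) A) :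
    flipPA N A * X = X.submatrix Prod.swap id := by
  rw [flipPA_eq_toMatrix, PEquiv.toMatrix_toPEquiv_mul]
  rfl

theorem mul_flipPA (X : Matrix (Fin N × Fin N) (Fin N × Fin N) A) :
    X * flipPA N A = X.submatrix id Prod.swap := by
  rw [flipPA_eq_toMatrix, PEquiv.mul_toMatrix_toPEquiv]
  rfl

theorem flipPA_mul_flipPA : flipPA N A * flipPA N A = 1 := by
  ext p q
  simp [flipPA_mul, flipPA, Matrix.one_apply, Prod.ext_iff, and_comm]

theorem isUnit_flipPA : IsUnit (flipPA N A) :=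
  ⟨⟨_, _, flipPA_mul_flipPA, flipPA_mul_flipPA⟩, rfl⟩

theorem flipPA_semiconjBy_emb1 (M : Matrix (Fin N) (Fin N) A) :
    SemiconjBy (flipPA N A) (emb1 M) (emb2 M) := by
  rw [SemiconjBy, flipPA_mul, mul_flipPA]
  rfl

theorem flipPA_semiconjBy_emb2 (M : Matrix (Fin N) (Fin N) A) :
    SemiconjBy (flipPA N A) (emb2 M) (emb1 M) := by
  rw [SemiconjBy, flipPA_mul, mul_flipPA]
  rfl

theorem flipPA_commute_yangRA (h w : ℂ) : Commute (flipPA N A) (yangRA N A h w) :=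
  (Commute.one_right _).sub_right ((Commute.refl _).smul_right _)

theorem yangRA_commute (h w w' : ℂ) : Commute (yangRA N A h w) (yangRA N A h w') := by
  unfold yangRA
  exact ((Commute.one_left _).sub_right ((Commute.one_left _).smul_right _)).sub_left
    (((Commute.one_right _).smul_left _).sub_right (((Commute.refl _).smul_left _).smul_right _))

theorem yangRA_mul_emb2_mul_emb1 {h w : ℂ} {X Y : Matrix (Fin N) (Fin N) A}
    (H : yangRA N A h w * emb1 X * emb2 Y = emb2 Y * emb1 X * yangRA N A h w) :
    yangRA N A h w * emb2 X * emb1 Y = emb1 Y * emb2 X * yangRA N A h w := by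
  have hR : SemiconjBy (flipPA N A) (yangRA N A h w) (yangRA N A h w) :=
    flipPA_commute_yangRA h w
  have hl := (hR.mul_right (flipPA_semiconjBy_emb1 X)).mul_right (flipPA_semiconjBy_emb2 Y)
  have hr := ((flipPA_semiconjBy_emb2 Y).mul_right (flipPA_semiconjBy_emb1 X)).mul_right hR
  exact isUnit_flipPA.mul_right_cancel (by rw [← hl.eq, ← hr.eq, H])

end Flip

theorem RTT_implies_reflection_general (N : ℕ) (h : ℂ)
    (T Tinv : ℂ → Matrix (Fin N) (Fin N) A)
    (hT : ∀ u, T u * Tinv u = 1 ∧ Tinv u * T u = 1)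
    (hRTT : ∀ u v : ℂ, u - v ≠ 0 →
      yangRA N A h (u - v) * emb1 (T u) * emb2 (T v)
        = emb2 (T v) * emb1 (T u) * yangRA N A h (u - v)) :
    (∀ u v : ℂ, u - v ≠ 0 → u + v ≠ 0 →
      yangRA N A h (u - v) * emb1 (T u * Tinv (-u)) * yangRA N A h (u + v) *
          emb2 (T v * Tinv (-v))
        = emb2 (T v * Tinv (-v)) * yangRA N A h (u + v) * emb1 (T u * Tinv (-u)) *
          yangRA N A h (u - v)) ∧
    (∀ u : ℂ, (T u * Tinv (-u)) * (T (-u) * Tinv u) = 1) := by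
  let Tunit : ℂ → (Matrix (Fin N) (Fin N) A)ˣ := fun u => ⟨T u, Tinv u, (hT u).1, (hT u).2⟩
  refine ⟨fun u v huv hsum => ?_, fun u => ?_⟩
  · have hyx' := yangRA_mul_emb2_mul_emb1 (hRTT v (-u) (by rwa [sub_neg_eq_add, add_comm]))
    have hxy' := hRTT u (-v) (by rwa [sub_neg_eq_add])
    have hy'x' := yangRA_mul_emb2_mul_emb1 (hRTT (-v) (-u) (by rwa [neg_sub_neg]))
    rw [sub_neg_eq_add, add_comm] at hyx'
    rw [sub_neg_eq_add] at hxy'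
    rw [neg_sub_neg] at hy'x'
    rw [emb1_mul, emb2_mul]
    exact reflection_equation_of_rtt (x' := Units.map (emb1Hom N A) (Tunit (-u)))
      (y' := Units.map (emb2Hom N A) (Tunit (-v))) (hRTT u v huv) hyx' hxy' hy'x'
      (yangRA_commute h _ _)
  · rw [mul_assoc, ← mul_assoc (Tinv (-u)), (hT (-u)).2, one_mul, (hT u).1]

/-- If an invertible matrix `T(u)` with entries in an associative algebra satisfies the
RTT relation for the Yang R-matrix, then `B(u) = T(u) T(-u)⁻¹` satisfies the reflection
equation `R(u-v) B₁(u) R(u+v) B₂(v) = B₂(v) R(u+v) B₁(u) R(u-v)`, and the unitarity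
condition `B(u) B(-u) = 1`. -/
theorem RTT_implies_reflection (N : ℕ) (hN : 2 ≤ N) (h : ℂ)
    (T Tinv : ℂ → Matrix (Fin N) (Fin N) A)
    (hT : ∀ u, T u * Tinv u = 1 ∧ Tinv u * T u = 1)
    (hRTT : ∀ u v : ℂ, u - v ≠ 0 →
      yangRA N A h (u - v) * emb1 (T u) * emb2 (T v)
        = emb2 (T v) * emb1 (T u) * yangRA N A h (u - v)) :
    (∀ u v : ℂ, u - v ≠ 0 → u + v ≠ 0 →
      yangRA N A h (u - v) * emb1 (T u * Tinv (-u)) * yangRA N A h (u + v) *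
          emb2 (T v * Tinv (-v))
        = emb2 (T v * Tinv (-v)) * yangRA N A h (u + v) * emb1 (T u * Tinv (-u)) *
          yangRA N A h (u - v)) ∧
    (∀ u : ℂ, (T u * Tinv (-u)) * (T (-u) * Tinv u) = 1) :=
  RTT_implies_reflection_general N h T Tinv hT hRTT

end
end
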